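/- Let n ≥ 3 be an integer and 1 < α < n + 1. For every ξ₀ > 0, set c₀ = (2ξ₀² + 1)/ξ₀ and a₀ = ψ_α(c₀)·c₀, where ψ_α(c) = 2 + 3/((1 + (4c² + 1)^{−(n+2−α)/2})^{1/(n−2)} − 1). Then for every ξ with 0 ≤ ξ ≤ ξ₀ and every a ≥ a₀ one has F(n, α, a, ξ) < 0. -/

import Mathlib

/-!
Let `c = c₀`, `p = (n + 2 - α)/2`, `b = 1 - ξ/a` (the zero of `ξ - a(1 - t)`) and
`w = 1 - (ξ + 2c)/a`.
The integrand is negative on `[0, b)` and positive on `(b, 1]`. Dropping `[0, w]`, substituting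
`σ = a|t - b|`, and using `w ≤ t ≤ 1` on `[w, b]` and `b ≤ t ≤ 1` on `[b, 1]` gives
`a F ≤ H_{b²}(ξ) - wⁿ⁻² H_1(2c)` with `H_c(x) = ∫₀ˣ (σ² + c)^{-p} σ dσ`.
Since `b² ≥ w`, `H_{b²}(ξ) ≤ w^{-p} H_1(ξ)`; since `2c > 4ξ`, `H_1(2c) > (1 + 15B) H_1(ξ)` with
`B = (4c² + 1)^{-p}`. So it suffices that `(1 + 15B) w^{n-2+p} ≥ 1`. With `(1 + ε)^{n-2} = 1 + B`,
the threshold `a ≥ ψ_α(c) c = (2 + 3/ε) c` gives `w ≥ (3 - ε)/(2ε + 3)`, and the claim follows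
from `(1 + B)⁴ ≤ 1 + 15B` and `(2ε + 3)³ < (1 + ε)⁴ (3 - ε)³` on `(0, 1]`.
-/

/-- `F(n, α, a, ξ) = ∫₀¹ ((a(1−t) − ξ)² + t²)^{(α−n−2)/2} (ξ − a(1−t)) t^{n−2} dt`. -/
noncomputable def F (n : ℕ) (α a ξ : ℝ) : ℝ :=
  ∫ t in (0:ℝ)..1,
    ((a * (1 - t) - ξ) ^ 2 + t ^ 2) ^ ((α - n - 2) / 2) * (ξ - a * (1 - t)) * t ^ (n - 2)

/-- `ψ_α(c)`. -/
noncomputable def psi (n : ℕ) (α c : ℝ) : ℝ :=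
  2 + 3 / ((1 + (4 * c ^ 2 + 1) ^ (-(((n : ℝ) + 2 - α) / 2))) ^ (1 / ((n : ℝ) - 2)) - 1)

open Real intervalIntegral

theorem two_mul_add_three_pow_three_lt {ε : ℝ} (h0 : 0 < ε) (h1 : ε ≤ 1) :
    (2 * ε + 3) ^ 3 < (1 + ε) ^ 4 * (3 - ε) ^ 3 := by
  nlinarith [mul_pos h0 h0, mul_pos (mul_pos h0 h0) h0, mul_nonneg h0.le (sub_nonneg.2 h1),
    mul_nonneg (mul_pos h0 h0).le (sub_nonneg.2 h1),
    mul_nonneg (mul_pos (mul_pos h0 h0) h0).le (sub_nonneg.2 h1)]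

theorem one_add_pow_four_le {B : ℝ} (h0 : 0 ≤ B) (h1 : B ≤ 1) : (1 + B) ^ 4 ≤ 1 + 15 * B := by
  nlinarith [mul_nonneg h0 (sub_nonneg.2 h1), mul_nonneg (mul_nonneg h0 h0) (sub_nonneg.2 h1),
    mul_nonneg (mul_nonneg (mul_nonneg h0 h0) h0) (sub_nonneg.2 h1)]

theorem one_lt_one_add_mul_rpow {m p ε w : ℝ} (hm : 0 < m) (hpm : p ≤ 2 * m) (hε0 : 0 < ε)
    (hε1 : ε ≤ 1) (hεm : (1 + ε) ^ m ≤ 2) (hw : (3 - ε) / (2 * ε + 3) ≤ w) (hw1 : w ≤ 1) :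
    1 < (1 + 15 * ((1 + ε) ^ m - 1)) * w ^ (m + p) := by
  set s := (3 - ε) / (2 * ε + 3)
  have hs : 0 < s := div_pos (by linarith) (by linarith)
  have hw0 : 0 < w := hs.trans_le hw
  have hεm1 : 1 ≤ (1 + ε) ^ m := one_le_rpow (by linarith) hm.le
  have hpoly : 1 < (1 + ε) ^ 4 * s ^ 3 := by
    rw [div_pow, ← mul_div_assoc, one_lt_div (by positivity)]
    exact two_mul_add_three_pow_three_lt hε0 hε1
  have hsw : (s ^ m) ^ 3 ≤ w ^ (m + p) := calc
    (s ^ m) ^ 3 ≤ (w ^ m) ^ 3 := by gcongr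
    _ = w ^ (3 * m) := by rw [← rpow_mul_natCast hw0.le, mul_comm]; norm_num
    _ ≤ w ^ (m + p) := rpow_le_rpow_of_exponent_ge hw0 hw1 (by linarith)
  calc 1 < ((1 + ε) ^ 4 * s ^ 3) ^ m := one_lt_rpow hpoly hm
    _ = ((1 + ε) ^ m) ^ 4 * (s ^ m) ^ 3 := by
      rw [mul_rpow (by positivity) (by positivity), rpow_pow_comm (by linarith),
        rpow_pow_comm hs.le]
    _ ≤ (1 + 15 * ((1 + ε) ^ m - 1)) * w ^ (m + p) := by
      refine mul_le_mul ?_ hsw (by positivity) (by linarith)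
      simpa using one_add_pow_four_le (B := (1 + ε) ^ m - 1) (by linarith) (by linarith)

theorem three_mul_lt_and_one_lt_of_psi_mul_le {n : ℕ} {α c a : ℝ} (hn : 3 ≤ n) (hα1 : 1 < α)
    (hα : α < n + 1) (hc : 0 < c) (ha : psi n α c * c ≤ a) :
    3 * c < a ∧ 1 < (1 + 15 * (4 * c ^ 2 + 1) ^ (-(((n : ℝ) + 2 - α) / 2))) *
      (1 - 3 * c / a) ^ (((n : ℝ) - 2) + ((n : ℝ) + 2 - α) / 2) := by
  set p := ((n : ℝ) + 2 - α) / 2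
  set m := (n : ℝ) - 2
  set B := (4 * c ^ 2 + 1) ^ (-p)
  set ε := (1 + B) ^ (1 / m) - 1
  have hn' : (3 : ℝ) ≤ n := by exact_mod_cast hn
  have hm : 1 ≤ m := by linarith
  have hp : 0 < p := div_pos (by linarith) two_pos
  have hpm : p ≤ 2 * m := by simp only [p, m]; linarith
  have hB0 : 0 < B := by positivity
  have hB1 : B < 1 := rpow_lt_one_of_one_lt_of_neg (by nlinarith) (by linarith)
  have hεm : (1 + ε) ^ m = 1 + B := by
    rw [add_sub_cancel, ← rpow_mul (by positivity), one_div_mul_cancel (by linarith), rpow_one]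
  have hε0 : 0 < ε := by
    have : 1 < (1 + B) ^ (1 / m) := one_lt_rpow (by linarith) (by positivity)
    linarith
  have hε1 : ε ≤ 1 := by
    have : (1 + B) ^ (1 / m) ≤ 1 + B := by
      simpa using rpow_le_rpow_of_exponent_le (x := 1 + B) (by linarith)
        ((div_le_one (by linarith)).2 hm)
    linarith
  have ha' : (2 + 3 / ε) * c ≤ a := ha
  have h5c : 5 * c ≤ a := by
    have : 3 ≤ 3 / ε := (le_div_iff₀ hε0).2 (by linarith)
    nlinarith
  have ha0 : 0 < a := by linarith
  refine ⟨by linarith, ?_⟩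
  have hw : (3 - ε) / (2 * ε + 3) ≤ 1 - 3 * c / a := by
    rw [div_le_iff₀ (by positivity), sub_mul, div_mul_eq_mul_div, le_sub_iff_add_le,
      ← le_sub_iff_add_le', div_le_iff₀ (by linarith)]
    field_simp at ha'
    nlinarith
  have hw1 : 1 - 3 * c / a ≤ 1 := by
    have : 0 ≤ 3 * c / a := by positivity
    linarith
  simpa [hεm] using one_lt_one_add_mul_rpow (by linarith) hpm hε0 hε1 (by linarith) hw hw1

noncomputable def kernelIntegral (p c x : ℝ) : ℝ := ∫ σ in (0 : ℝ)..x, (σ ^ 2 + c) ^ (-p) * σ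

section kernelIntegral

variable {p c : ℝ}

theorem continuous_kernel (hc : 0 < c) : Continuous fun σ : ℝ ↦ (σ ^ 2 + c) ^ (-p) * σ :=
  (Continuous.rpow_const (by fun_prop) fun σ ↦ Or.inl (by positivity)).mul continuous_id

theorem kernelIntegral_nonneg (hc : 0 < c) {x : ℝ} (hx : 0 ≤ x) : 0 ≤ kernelIntegral p c x :=
  integral_nonneg hx fun σ hσ ↦ mul_nonneg (by positivity) hσ.1

theorem kernelIntegral_le_half_sq (hp : 0 ≤ p) (hc : 1 ≤ c) {x : ℝ} (hx : 0 ≤ x) :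
    kernelIntegral p c x ≤ x ^ 2 / 2 := by
  calc kernelIntegral p c x ≤ ∫ σ in (0 : ℝ)..x, σ := by
        refine integral_mono_on hx ((continuous_kernel (by linarith)).intervalIntegrable _ _)
          intervalIntegrable_id fun σ hσ ↦ mul_le_of_le_one_left hσ.1 ?_
        exact rpow_le_one_of_one_le_of_nonpos (by nlinarith) (by linarith)
    _ = x ^ 2 / 2 := by simp [integral_id]

theorem kernelIntegral_add_le (hp : 0 ≤ p) (hc : 0 < c) {ξ K : ℝ} (hξ : 0 ≤ ξ) (hξK : ξ ≤ K) :
    kernelIntegral p c ξ + (K ^ 2 + c) ^ (-p) * ((K ^ 2 - ξ ^ 2) / 2) ≤ kernelIntegral p c K := by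
  have hint := continuous_kernel (p := p) hc
  have htail : (K ^ 2 + c) ^ (-p) * ((K ^ 2 - ξ ^ 2) / 2) ≤
      ∫ σ in ξ..K, (σ ^ 2 + c) ^ (-p) * σ := by
    rw [← integral_id, ← integral_const_mul]
    refine integral_mono_on hξK ((continuous_const.mul continuous_id).intervalIntegrable _ _)
      (hint.intervalIntegrable _ _) fun σ hσ ↦ ?_
    exact mul_le_mul_of_nonneg_right
      (rpow_le_rpow_of_nonpos (by positivity) (by nlinarith [hσ.1, hσ.2]) (by linarith))
      (hξ.trans hσ.1)
  rw [kernelIntegral, kernelIntegral, ← integral_add_adjacent_intervals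
    (hint.intervalIntegrable 0 ξ) (hint.intervalIntegrable ξ K)]
  linarith

theorem kernelIntegral_le_rpow_mul (hp : 0 ≤ p) {w x : ℝ} (hw0 : 0 < w) (hw1 : w ≤ 1)
    (hwc : w ≤ c) (hx : 0 ≤ x) : kernelIntegral p c x ≤ w ^ (-p) * kernelIntegral p 1 x := by
  rw [kernelIntegral, kernelIntegral, ← integral_const_mul]
  refine integral_mono_on hx ((continuous_kernel (by linarith)).intervalIntegrable _ _)
    ((continuous_kernel one_pos).const_mul _ |>.intervalIntegrable _ _) fun σ hσ ↦ ?_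
  rw [← mul_assoc, ← mul_rpow hw0.le (by positivity)]
  exact mul_le_mul_of_nonneg_right
    (rpow_le_rpow_of_nonpos (by positivity) (by nlinarith) (by linarith)) hσ.1

theorem kernelIntegral_lt_rpow_mul (hp : 0 ≤ p) {m w ξ K : ℝ} (hw0 : 0 < w) (hw1 : w ≤ 1)
    (hwc : w ≤ c) (hξ : 0 ≤ ξ) (hξK : 4 * ξ < K)
    (h : 1 ≤ (1 + 15 * (K ^ 2 + 1) ^ (-p)) * w ^ (m + p)) :
    kernelIntegral p c ξ < w ^ m * kernelIntegral p 1 K := by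
  set B := (K ^ 2 + 1) ^ (-p)
  have hB : 0 < B := by positivity
  have hH0 := kernelIntegral_nonneg (p := p) one_pos hξ
  have hHξ := kernelIntegral_le_half_sq hp le_rfl hξ
  have hHK := kernelIntegral_add_le hp one_pos hξ (by linarith : ξ ≤ K)
  have hgrowth : (1 + 15 * B) * kernelIntegral p 1 ξ < kernelIntegral p 1 K := by
    nlinarith [mul_lt_mul_of_pos_left (show 16 * ξ ^ 2 < K ^ 2 by nlinarith) hB]
  calc kernelIntegral p c ξ ≤ w ^ (-p) * kernelIntegral p 1 ξ :=
        kernelIntegral_le_rpow_mul hp hw0 hw1 hwc hξ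
    _ ≤ w ^ (-p) * (((1 + 15 * B) * w ^ (m + p)) * kernelIntegral p 1 ξ) := by
        gcongr; exact le_mul_of_one_le_left hH0 h
    _ = (w ^ (-p) * w ^ (m + p)) * ((1 + 15 * B) * kernelIntegral p 1 ξ) := by ring
    _ = w ^ m * ((1 + 15 * B) * kernelIntegral p 1 ξ) := by
        rw [← rpow_add hw0, show -p + (m + p) = m by ring]
    _ < w ^ m * kernelIntegral p 1 K := by gcongr

end kernelIntegral

noncomputable def integrand (p : ℝ) (k : ℕ) (a ξ t : ℝ) : ℝ :=
  ((a * (1 - t) - ξ) ^ 2 + t ^ 2) ^ (-p) * (ξ - a * (1 - t)) * t ^ k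

theorem F_eq_integral_integrand (n : ℕ) (α a ξ : ℝ) :
    F n α a ξ = ∫ t in (0 : ℝ)..1, integrand (((n : ℝ) + 2 - α) / 2) (n - 2) a ξ t := by
  simp only [F, integrand, show (α - n - 2) / 2 = -(((n : ℝ) + 2 - α) / 2) by ring]

section integrand

variable {p : ℝ} {k : ℕ} {a ξ : ℝ}

theorem continuous_integrand (hξa : ξ ≠ a) : Continuous (integrand p k a ξ) := by
  refine ((Continuous.rpow_const (by fun_prop) fun t ↦ Or.inl ?_).mul (by fun_prop)).mul
    (by fun_prop)
  rcases eq_or_ne t 0 with rfl | ht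
  · simpa [sub_eq_zero] using hξa.symm
  · positivity

theorem integral_integrand_nonpos {w : ℝ} (ha : 0 ≤ a) (hw : 0 ≤ w) (hξw : ξ ≤ a * (1 - w))
    (hint : IntervalIntegrable (integrand p k a ξ) MeasureTheory.volume 0 w) :
    ∫ t in (0 : ℝ)..w, integrand p k a ξ t ≤ 0 := by
  refine (integral_mono_on hw hint intervalIntegrable_const fun t ht ↦ ?_).trans_eq
    integral_zero
  have : a * (1 - w) ≤ a * (1 - t) := by gcongr; exact ht.2
  exact mul_nonpos_of_nonpos_of_nonneg
    (mul_nonpos_of_nonneg_of_nonpos (by positivity) (by linarith)) (pow_nonneg ht.1 _)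

theorem integral_integrand_le_of_le_zero {b w : ℝ} (hp : 0 ≤ p) (ha : 0 < a) (hw : 0 < w)
    (hwb : w ≤ b) (hb : b ≤ 1) (hξ : a * (1 - b) = ξ)
    (hint : IntervalIntegrable (integrand p k a ξ) MeasureTheory.volume w b) :
    ∫ t in w..b, integrand p k a ξ t ≤ -(w ^ k * a⁻¹ * kernelIntegral p 1 (a * (b - w))) := by
  have hsub : ∫ t in w..b, ((a * b - a * t) ^ 2 + 1) ^ (-p) * (a * b - a * t) =
      a⁻¹ * kernelIntegral p 1 (a * (b - w)) := by
    rw [integral_comp_sub_mul (fun σ ↦ (σ ^ 2 + 1) ^ (-p) * σ) ha.ne', smul_eq_mul, sub_self,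
      ← mul_sub, kernelIntegral]
  rw [mul_assoc, ← hsub, ← integral_const_mul, ← integral_neg]
  refine integral_mono_on hwb hint
    (((continuous_kernel one_pos).comp (by fun_prop)).const_mul _ |>.neg.intervalIntegrable _ _)
    fun t ht ↦ ?_
  have ht0 : 0 < t := hw.trans_le ht.1
  have hu : a * (1 - t) - ξ = a * b - a * t := by rw [← hξ]; ring
  have hu0 : 0 ≤ a * b - a * t := by nlinarith [ht.2]
  simp only [integrand, hu, show ξ - a * (1 - t) = -(a * b - a * t) by linarith]
  have hkernel : ((a * b - a * t) ^ 2 + 1) ^ (-p) ≤ ((a * b - a * t) ^ 2 + t ^ 2) ^ (-p) :=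
    rpow_le_rpow_of_nonpos (by positivity) (by nlinarith [ht.2]) (by linarith)
  have hpow : w ^ k ≤ t ^ k := pow_le_pow_left₀ hw.le ht.1 k
  nlinarith [mul_le_mul hpow (mul_le_mul_of_nonneg_right hkernel hu0) (by positivity)
    (by positivity)]

theorem integral_integrand_le_of_zero_le {b : ℝ} (hp : 0 ≤ p) (ha : 0 < a) (hb0 : 0 < b)
    (hb : b ≤ 1) (hξ : a * (1 - b) = ξ)
    (hint : IntervalIntegrable (integrand p k a ξ) MeasureTheory.volume b 1) :
    ∫ t in b..1, integrand p k a ξ t ≤ a⁻¹ * kernelIntegral p (b ^ 2) ξ := by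
  have hsub : ∫ t in b..1, ((a * t - a * b) ^ 2 + b ^ 2) ^ (-p) * (a * t - a * b) =
      a⁻¹ * kernelIntegral p (b ^ 2) ξ := by
    rw [integral_comp_mul_sub (fun σ ↦ (σ ^ 2 + b ^ 2) ^ (-p) * σ) ha.ne', smul_eq_mul, sub_self,
      mul_one, ← mul_one_sub, hξ, kernelIntegral]
  rw [← hsub]
  refine integral_mono_on hb hint
    (((continuous_kernel (by positivity)).comp (by fun_prop)).intervalIntegrable _ _)
    fun t ht ↦ ?_
  have ht0 : 0 < t := hb0.trans_le ht.1
  have hu : ξ - a * (1 - t) = a * t - a * b := by rw [← hξ]; ring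
  have hu0 : 0 ≤ a * t - a * b := by nlinarith [ht.1]
  simp only [integrand, hu, show a * (1 - t) - ξ = -(a * t - a * b) by linarith, neg_sq]
  have hkernel : ((a * t - a * b) ^ 2 + t ^ 2) ^ (-p) ≤ ((a * t - a * b) ^ 2 + b ^ 2) ^ (-p) :=
    rpow_le_rpow_of_nonpos (by positivity) (by nlinarith [ht.1]) (by linarith)
  calc _ ≤ ((a * t - a * b) ^ 2 + t ^ 2) ^ (-p) * (a * t - a * b) :=
        mul_le_of_le_one_right (by positivity) (pow_le_one₀ ht0.le ht.2)
    _ ≤ _ := mul_le_mul_of_nonneg_right hkernel hu0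

end integrand

theorem integral_integrand_neg {p : ℝ} {k : ℕ} {a ξ K : ℝ} (hp : 0 ≤ p) (ha : 0 < a)
    (hξ : 0 ≤ ξ) (hξK : 4 * ξ < K) (hw : 0 < 1 - (ξ + K) / a)
    (h : 1 ≤ (1 + 15 * (K ^ 2 + 1) ^ (-p)) * (1 - (ξ + K) / a) ^ ((k : ℝ) + p)) :
    ∫ t in (0 : ℝ)..1, integrand p k a ξ t < 0 := by
  set b := 1 - ξ / a
  set w := 1 - (ξ + K) / a
  have hξb : a * (1 - b) = ξ := by simp only [b]; field_simp; ring
  have hKw : a * (b - w) = K := by simp only [b, w]; field_simp; ring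
  have hwb : w ≤ b := by nlinarith
  have hb1 : b ≤ 1 := by simp only [b]; linarith [div_nonneg hξ ha.le]
  have hwb2 : w ≤ b ^ 2 := by nlinarith [sq_nonneg (ξ / a)]
  have hξa : ξ < a := by
    have := (div_lt_one ha).1 (by linarith : (ξ + K) / a < 1)
    linarith
  have hcont := continuous_integrand (p := p) (k := k) hξa.ne
  have hint (x y : ℝ) := hcont.intervalIntegrable (μ := MeasureTheory.volume) x y
  have hleft := integral_integrand_nonpos (p := p) (k := k) ha.le hw.le
    (by linarith [show a * (1 - w) = ξ + K by rw [← hξb, ← hKw]; ring]) (hint 0 w)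
  have hmid := integral_integrand_le_of_le_zero hp ha hw hwb hb1 hξb (hint w b)
  have hright := integral_integrand_le_of_zero_le hp ha (hw.trans_le hwb) hb1 hξb (hint b 1)
  have hkernel := kernelIntegral_lt_rpow_mul hp hw (by linarith) hwb2 hξ hξK h
  rw [hKw, rpow_natCast] at *
  rw [← integral_add_adjacent_intervals (hint 0 b) (hint b 1),
    ← integral_add_adjacent_intervals (hint 0 w) (hint w b)]
  nlinarith [mul_lt_mul_of_pos_left hkernel (inv_pos.2 ha)]

theorem stmt_7 (n : ℕ) (hn : 3 ≤ n) (α : ℝ) (hα1 : 1 < α) (hα : α < n + 1)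
    (ξ₀ : ℝ) (hξ₀ : 0 < ξ₀) (ξ a : ℝ) (hξ0 : 0 ≤ ξ) (hξ : ξ ≤ ξ₀)
    (ha : psi n α ((2 * ξ₀ ^ 2 + 1) / ξ₀) * ((2 * ξ₀ ^ 2 + 1) / ξ₀) ≤ a) :
    F n α a ξ < 0 := by
  set c := (2 * ξ₀ ^ 2 + 1) / ξ₀
  have hc : 2 * ξ₀ < c := by rw [lt_div_iff₀ hξ₀]; nlinarith
  obtain ⟨h3c, hthreshold⟩ := three_mul_lt_and_one_lt_of_psi_mul_le hn hα1 hα (by linarith) ha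
  have ha0 : 0 < a := by linarith
  have hw : 1 - 3 * c / a ≤ 1 - (ξ + 2 * c) / a := by gcongr; linarith
  have hw0 : 0 < 1 - 3 * c / a := by rw [sub_pos, div_lt_one ha0]; exact h3c
  have hn' : (3 : ℝ) ≤ n := by exact_mod_cast hn
  have hn2 : (((n - 2 : ℕ) : ℝ)) = (n : ℝ) - 2 := by rw [Nat.cast_sub (by omega)]; norm_num
  rw [F_eq_integral_integrand]
  refine integral_integrand_neg (by linarith) ha0 hξ0 (by linarith) (hw0.trans_le hw) ?_
  calc 1 ≤ _ := hthreshold.le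
    _ ≤ _ := by rw [hn2, show (2 * c) ^ 2 = 4 * c ^ 2 by ring]; gcongr; linarith
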